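/- Fix c with 0 < c < 1, and suppose that for every group a ∈ G the conditional law of p(X) given g(X) = a has positive density on [0,1]. If d and d' are two decision rules that both satisfy statistical parity and both attain the maximum of u(·,c) over all decision rules satisfying statistical parity, then d(X) = d'(X) μ-almost surely. -/

import Mathlib

/-!
On each group, an optimal rule `f` under statistical parity is almost surely a threshold rule
`1{p(X) > t}`. Indeed, let `m` be the mean of `f`; since the conditional law of `p(X)` on the
group is atomless, some threshold rule has conditional mean exactly `m` there. Swapping `f` for
it on that group preserves parity and all means, and since `(p - t)(1{p > t} - f) ≥ 0` pointwise
it cannot lower the utility; optimality of `f` forces this product to vanish a.e., and ties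
`p(X) = t` are null. The utility is affine and parity is preserved under averaging, so the
midpoint of two optimal rules `d, d'` is optimal too, hence also a threshold rule on each group;
but the average of two values in `{0, 1}` lies in `{0, 1}` only if they are equal.
-/

open MeasureTheory ProbabilityTheory Set

noncomputable section

/-- A probability law on ℝ has positive density on `[0,1]`. -/
def PosDensity01 (ν : Measure ℝ) : Prop :=
  ∃ φ : ℝ → ENNReal,
    ν = volume.withDensity φ ∧
    (∀ᵐ x ∂(volume.restrict (Icc (0:ℝ) 1)), 0 < φ x) ∧
    (∀ᵐ x ∂(volume : Measure ℝ), x ∉ Icc (0:ℝ) 1 → φ x = 0)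

/-- A decision rule `d` satisfies statistical parity. -/
def StatParity {Ω 𝒳 G : Type*} [MeasurableSpace Ω]
    (μ : Measure Ω) (X : Ω → 𝒳) (g : 𝒳 → G) (d : 𝒳 → ℝ) : Prop :=
  ∀ a : G, (∫ ω in {ω | g (X ω) = a}, d (X ω) ∂μ) / (μ {ω | g (X ω) = a}).toReal
    = ∫ ω, d (X ω) ∂μ

lemma continuous_cdf (ν : Measure ℝ) [IsProbabilityMeasure ν] [NullSingletonClass ν] :
    Continuous (cdf ν) := by
  refine continuous_iff_continuousAt.2 fun x => ?_
  rw [(cdf ν).mono.continuousAt_iff_leftLim_eq_rightLim, (cdf ν).rightLim_eq]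
  have hjump := (cdf ν).measure_singleton x
  rw [measure_cdf, measure_singleton, eq_comm, ENNReal.ofReal_eq_zero] at hjump
  linarith [(cdf ν).mono.leftLim_le (le_refl x)]

lemma exists_measureReal_Ioi_eq (ν : Measure ℝ) [IsProbabilityMeasure ν] [NullSingletonClass ν]
    {a b : ℝ} (hab : a ≤ b) (ha : ν (Iic a) = 0) (hb : ν (Ioi b) = 0) {m : ℝ}
    (hm : m ∈ Icc (0:ℝ) 1) : ∃ t, ν.real (Ioi t) = m := by
  have hIoi : ∀ t, ν.real (Ioi t) = 1 - cdf ν t := fun t => by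
    rw [cdf_eq_real, ← compl_Iic, measureReal_compl measurableSet_Iic, probReal_univ]
  have hcdf_a : cdf ν a = 0 := by rw [cdf_eq_real, measureReal_def, ha, ENNReal.toReal_zero]
  have hcdf_b : cdf ν b = 1 := by
    linarith [hIoi b, show ν.real (Ioi b) = 0 by rw [measureReal_def, hb, ENNReal.toReal_zero]]
  obtain ⟨t, -, ht⟩ := intermediate_value_Icc hab (continuous_cdf ν).continuousOn
    (show 1 - m ∈ Icc (cdf ν a) (cdf ν b) by
      rw [hcdf_a, hcdf_b]; constructor <;> linarith [hm.1, hm.2])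
  exact ⟨t, by rw [hIoi, ht]; ring⟩

lemma PosDensity01.nullSingletonClass {ν : Measure ℝ} (hν : PosDensity01 ν) :
    NullSingletonClass ν := by
  obtain ⟨φ, rfl, -⟩ := hν
  exact ⟨fun x => withDensity_absolutelyContinuous _ φ (measure_singleton x)⟩

lemma sub_mul_threshold_sub_nonneg {q t y : ℝ} (hy : y ∈ Icc (0:ℝ) 1) :
    0 ≤ (q - t) * ((if t < q then 1 else 0) - y) := by
  split_ifs with h
  · exact mul_nonneg (by linarith) (by linarith [hy.2])
  · exact mul_nonneg_of_nonpos_of_nonpos (by linarith) (by linarith [hy.1])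

lemma eq_of_two_inv_mul_add_eq_ite {P Q R : Prop} [Decidable P] [Decidable Q] [Decidable R]
    (h : 2⁻¹ * ((if P then (1:ℝ) else 0) + if Q then 1 else 0) = if R then 1 else 0) :
    (if P then (1:ℝ) else 0) = if Q then 1 else 0 := by
  split_ifs at h ⊢ <;> linarith

section Generic

variable {Ω : Type*} [MeasurableSpace Ω] {μ : Measure Ω}

lemma integrable_of_mem_Icc [IsFiniteMeasure μ] {f : Ω → ℝ} (hf : Measurable f)
    (hf01 : ∀ ω, f ω ∈ Icc (0:ℝ) 1) : Integrable f μ :=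
  .of_bound hf.aestronglyMeasurable 1 <| ae_of_all _ fun ω => by
    rw [Real.norm_eq_abs, abs_le]; constructor <;> linarith [(hf01 ω).1, (hf01 ω).2]

lemma integral_mem_Icc_of_mem_Icc [IsProbabilityMeasure μ] {f : Ω → ℝ} (hf : Measurable f)
    (hf01 : ∀ ω, f ω ∈ Icc (0:ℝ) 1) : ∫ ω, f ω ∂μ ∈ Icc (0:ℝ) 1 :=
  ⟨integral_nonneg fun ω => (hf01 ω).1, by
    simpa using integral_mono (integrable_of_mem_Icc (μ := μ) hf hf01) (integrable_const (1:ℝ))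
      fun ω => (hf01 ω).2⟩

lemma setIntegral_threshold {S : Set Ω} {q : Ω → ℝ} (hq : Measurable q) (t : ℝ) :
    ∫ ω in S, (if t < q ω then (1:ℝ) else 0) ∂μ = μ.real (S ∩ q ⁻¹' Ioi t) := by
  have hind : (fun ω => if t < q ω then (1:ℝ) else 0) = (q ⁻¹' Ioi t).indicator 1 := by
    ext ω; by_cases h : t < q ω <;> simp [h]
  rw [hind, integral_indicator_one (hq measurableSet_Ioi), measureReal_restrict_apply
    (hq measurableSet_Ioi), inter_comm]

lemma exists_measureReal_inter_preimage_Ioi_eq [IsFiniteMeasure μ] {S : Set Ω}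
    (hS : MeasurableSet S) (hμS : μ S ≠ 0) {q : Ω → ℝ} (hq : Measurable q)
    (hq01 : ∀ ω, q ω ∈ Icc (0:ℝ) 1) [NullSingletonClass ((μ[|S]).map q)] {m : ℝ}
    (hm : m ∈ Icc (0:ℝ) 1) : ∃ t, μ.real (S ∩ q ⁻¹' Ioi t) = m * μ.real S := by
  have : IsProbabilityMeasure (μ[|S]) := cond_isProbabilityMeasure hμS
  have : IsProbabilityMeasure ((μ[|S]).map q) := Measure.isProbabilityMeasure_map hq.aemeasurable
  have hempty : ∀ B : Set ℝ, MeasurableSet B → (∀ ω, q ω ∉ B) → (μ[|S]).map q B = 0 :=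
    fun B hB hqB => by
      rw [Measure.map_apply hq hB, show q ⁻¹' B = ∅ from eq_empty_of_forall_notMem hqB,
        measure_empty]
  obtain ⟨t, ht⟩ := exists_measureReal_Ioi_eq ((μ[|S]).map q) (by norm_num : (-1:ℝ) ≤ 1)
    (hempty _ measurableSet_Iic fun ω h => by linarith [(hq01 ω).1, mem_Iic.1 h])
    (hempty _ measurableSet_Ioi fun ω h => by linarith [(hq01 ω).2, mem_Ioi.1 h]) hm
  refine ⟨t, ?_⟩
  have hμS' : μ.real S ≠ 0 := (measureReal_ne_zero_iff (measure_ne_top μ S)).2 hμS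
  rw [← ht, measureReal_def (Measure.map _ _), Measure.map_apply hq measurableSet_Ioi,
    cond_apply hS, ENNReal.toReal_mul, ENNReal.toReal_inv, ← measureReal_def, ← measureReal_def]
  field_simp

lemma measure_inter_preimage_singleton_eq_zero [IsFiniteMeasure μ] {S : Set Ω}
    (hS : MeasurableSet S) {q : Ω → ℝ} (hq : Measurable q) [NullSingletonClass ((μ[|S]).map q)]
    (t : ℝ) : μ (S ∩ q ⁻¹' {t}) = 0 := by
  have hatom := measure_singleton (μ := (μ[|S]).map q) t
  rw [Measure.map_apply hq (measurableSet_singleton t), cond_apply hS,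
    mul_eq_zero, ENNReal.inv_eq_zero] at hatom
  exact hatom.resolve_left (measure_ne_top μ S)

lemma integral_eq_of_setIntegral_eq_of_eqOn_compl {S : Set Ω} (hS : MeasurableSet S)
    {e f : Ω → ℝ} (he : Integrable e μ) (hf : Integrable f μ) (hSc : EqOn e f Sᶜ)
    (hSeq : ∫ ω in S, e ω ∂μ = ∫ ω in S, f ω ∂μ) : ∫ ω, e ω ∂μ = ∫ ω, f ω ∂μ := by
  rw [← integral_add_compl hS he, ← integral_add_compl hS hf, hSeq,
    setIntegral_congr_fun hS.compl hSc]

lemma ae_mul_sub_eq_zero_of_integral_mul_le {q e f : Ω → ℝ} {t : ℝ}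
    (he : Integrable e μ) (hf : Integrable f μ) (hqe : Integrable (fun ω => q ω * e ω) μ)
    (hqf : Integrable (fun ω => q ω * f ω) μ) (hmean : ∫ ω, e ω ∂μ = ∫ ω, f ω ∂μ)
    (hle : ∫ ω, q ω * e ω ∂μ ≤ ∫ ω, q ω * f ω ∂μ)
    (hnonneg : ∀ ω, 0 ≤ (q ω - t) * (e ω - f ω)) :
    ∀ᵐ ω ∂μ, (q ω - t) * (e ω - f ω) = 0 := by
  have hexpand : (fun ω => (q ω - t) * (e ω - f ω))
      = fun ω => (q ω * e ω - q ω * f ω) - t * (e ω - f ω) := by ext; ring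
  have hqef : Integrable (fun ω => q ω * e ω - q ω * f ω) μ := hqe.sub hqf
  have hef : Integrable (fun ω => t * (e ω - f ω)) μ := (he.sub hf).const_mul t
  have hint : Integrable (fun ω => (q ω - t) * (e ω - f ω)) μ := by
    rw [hexpand]; exact hqef.sub hef
  have hzero : ∫ ω, (q ω - t) * (e ω - f ω) ∂μ = 0 := by
    refine le_antisymm ?_ (integral_nonneg hnonneg)
    rw [hexpand, integral_sub hqef hef, integral_sub hqe hqf, integral_const_mul,
      integral_sub he hf, hmean]
    linarith
  exact (integral_eq_zero_iff_of_nonneg hnonneg hint).1 hzero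

lemma ae_eq_threshold_of_integral_mul_le {S : Set Ω} {q e f : Ω → ℝ} {t : ℝ}
    (he : Integrable e μ) (hf : Integrable f μ) (hqe : Integrable (fun ω => q ω * e ω) μ)
    (hqf : Integrable (fun ω => q ω * f ω) μ) (hf01 : ∀ ω, f ω ∈ Icc (0:ℝ) 1)
    (hon : ∀ ω ∈ S, e ω = if t < q ω then 1 else 0) (hoff : ∀ ω ∉ S, e ω = f ω)
    (hmean : ∫ ω, e ω ∂μ = ∫ ω, f ω ∂μ) (hle : ∫ ω, q ω * e ω ∂μ ≤ ∫ ω, q ω * f ω ∂μ)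
    (hatom : μ (S ∩ q ⁻¹' {t}) = 0) :
    ∀ᵐ ω ∂μ, ω ∈ S → f ω = if t < q ω then 1 else 0 := by
  have hnonneg : ∀ ω, 0 ≤ (q ω - t) * (e ω - f ω) := fun ω => by
    by_cases hω : ω ∈ S
    · rw [hon ω hω]; exact sub_mul_threshold_sub_nonneg (hf01 ω)
    · rw [hoff ω hω, sub_self, mul_zero]
  filter_upwards [ae_mul_sub_eq_zero_of_integral_mul_le he hf hqe hqf hmean hle hnonneg,
    measure_eq_zero_iff_ae_notMem.1 hatom] with ω hω0 hωt hωS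
  have hne : q ω - t ≠ 0 := sub_ne_zero.2 fun h => hωt ⟨hωS, h⟩
  rw [← hon ω hωS, eq_comm, ← sub_eq_zero]
  exact (mul_eq_zero.1 hω0).resolve_left hne

end Generic

section Fairness

variable {Ω 𝒳 G : Type*} [MeasurableSpace Ω] {μ : Measure Ω} {X : Ω → 𝒳} {g : 𝒳 → G}
  {p : 𝒳 → ℝ} {c : ℝ}

/-- The utility `u(e, c)` with `Y` replaced by the risk score `p(X)`. -/
def expectedUtility (μ : Measure Ω) (X : Ω → 𝒳) (p : 𝒳 → ℝ) (c : ℝ) (e : 𝒳 → ℝ) : ℝ :=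
  ∫ ω, p (X ω) * e (X ω) ∂μ - c * ∫ ω, e (X ω) ∂μ

lemma expectedUtility_add {d d' : 𝒳 → ℝ} (hd : Integrable (fun ω => d (X ω)) μ)
    (hd' : Integrable (fun ω => d' (X ω)) μ) (hpd : Integrable (fun ω => p (X ω) * d (X ω)) μ)
    (hpd' : Integrable (fun ω => p (X ω) * d' (X ω)) μ) :
    expectedUtility μ X p c (d + d') = expectedUtility μ X p c d + expectedUtility μ X p c d' := by
  simp only [expectedUtility, Pi.add_apply, mul_add]
  rw [integral_add hpd hpd', integral_add hd hd']
  ring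

lemma expectedUtility_const_mul (r : ℝ) (d : 𝒳 → ℝ) :
    expectedUtility μ X p c (fun x => r * d x) = r * expectedUtility μ X p c d := by
  simp only [expectedUtility, mul_left_comm _ r, integral_const_mul]
  ring

lemma StatParity.add {d d' : 𝒳 → ℝ} (hd : StatParity μ X g d) (hd' : StatParity μ X g d')
    (hdi : Integrable (fun ω => d (X ω)) μ) (hdi' : Integrable (fun ω => d' (X ω)) μ) :
    StatParity μ X g (d + d') := fun a => by
  simp only [Pi.add_apply]
  rw [integral_add hdi.integrableOn hdi'.integrableOn, integral_add hdi hdi', add_div, hd a, hd' a]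

lemma StatParity.const_mul {d : 𝒳 → ℝ} (hd : StatParity μ X g d) (r : ℝ) :
    StatParity μ X g (fun x => r * d x) := fun a => by
  simp only [integral_const_mul, mul_div_assoc, hd a]

section Measurable

variable [MeasurableSpace 𝒳]

lemma integrable_comp_of_mem_Icc [IsFiniteMeasure μ] (hX : Measurable X)
    {r : 𝒳 → ℝ} (hr : Measurable r) (hr01 : ∀ x, r x ∈ Icc (0:ℝ) 1) :
    Integrable (fun ω => r (X ω)) μ :=
  integrable_of_mem_Icc (hr.comp hX) fun ω => hr01 (X ω)

lemma expectedUtility_midpoint [IsFiniteMeasure μ] (hX : Measurable X)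
    (hp : Measurable p) (hp01 : ∀ x, p x ∈ Icc (0:ℝ) 1) {d d' : 𝒳 → ℝ} (hd : Measurable d)
    (hd01 : ∀ x, d x ∈ Icc (0:ℝ) 1) (hd' : Measurable d') (hd01' : ∀ x, d' x ∈ Icc (0:ℝ) 1) :
    expectedUtility μ X p c (fun x => 2⁻¹ * (d + d') x)
      = 2⁻¹ * (expectedUtility μ X p c d + expectedUtility μ X p c d') := by
  rw [expectedUtility_const_mul, expectedUtility_add (integrable_comp_of_mem_Icc hX hd hd01)
    (integrable_comp_of_mem_Icc hX hd' hd01')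
    (integrable_comp_of_mem_Icc hX (hp.mul hd) fun x => unitInterval.mul_mem (hp01 x) (hd01 x))
    (integrable_comp_of_mem_Icc hX (hp.mul hd') fun x => unitInterval.mul_mem (hp01 x) (hd01' x))]

def IsOptimalUnderParity (μ : Measure Ω) (X : Ω → 𝒳) (g : 𝒳 → G) (p : 𝒳 → ℝ) (c : ℝ)
    (f : 𝒳 → ℝ) : Prop :=
  ∀ e : 𝒳 → ℝ, Measurable e → (∀ x, e x ∈ Icc (0:ℝ) 1) → StatParity μ X g e →
    expectedUtility μ X p c e ≤ expectedUtility μ X p c f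

lemma integral_mul_sub_eq_expectedUtility {Y : Ω → ℝ}
    (hrisk : ∀ f : 𝒳 → ℝ, Measurable f → (∃ C, ∀ x, |f x| ≤ C) →
      ∫ ω, Y ω * f (X ω) ∂μ = ∫ ω, p (X ω) * f (X ω) ∂μ)
    {e : 𝒳 → ℝ} (he : Measurable e) (he01 : ∀ x, e x ∈ Icc (0:ℝ) 1) :
    (∫ ω, Y ω * e (X ω) ∂μ) - c * ∫ ω, e (X ω) ∂μ = expectedUtility μ X p c e := by
  rw [hrisk e he ⟨1, fun x => abs_le.2 ⟨by linarith [(he01 x).1], (he01 x).2⟩⟩, expectedUtility]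

lemma isOptimalUnderParity_of_integral_mul_sub_le {Y : Ω → ℝ}
    (hrisk : ∀ f : 𝒳 → ℝ, Measurable f → (∃ C, ∀ x, |f x| ≤ C) →
      ∫ ω, Y ω * f (X ω) ∂μ = ∫ ω, p (X ω) * f (X ω) ∂μ)
    {d : 𝒳 → ℝ} (hd : Measurable d) (hd01 : ∀ x, d x ∈ Icc (0:ℝ) 1)
    (hmax : ∀ e : 𝒳 → ℝ, Measurable e → (∀ x, e x ∈ Icc (0:ℝ) 1) → StatParity μ X g e →
      (∫ ω, Y ω * e (X ω) ∂μ) - c * ∫ ω, e (X ω) ∂μ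
        ≤ (∫ ω, Y ω * d (X ω) ∂μ) - c * ∫ ω, d (X ω) ∂μ) :
    IsOptimalUnderParity μ X g p c d := fun e he he01 heP => by
  rw [← integral_mul_sub_eq_expectedUtility hrisk he he01,
    ← integral_mul_sub_eq_expectedUtility hrisk hd hd01]
  exact hmax e he he01 heP

lemma IsOptimalUnderParity.midpoint [IsFiniteMeasure μ] (hX : Measurable X) (hp : Measurable p)
    (hp01 : ∀ x, p x ∈ Icc (0:ℝ) 1) {d d' : 𝒳 → ℝ} (hd : Measurable d)
    (hd01 : ∀ x, d x ∈ Icc (0:ℝ) 1) (hd' : Measurable d') (hd01' : ∀ x, d' x ∈ Icc (0:ℝ) 1)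
    (hopt : IsOptimalUnderParity μ X g p c d) (hopt' : IsOptimalUnderParity μ X g p c d') :
    IsOptimalUnderParity μ X g p c (fun x => 2⁻¹ * (d + d') x) := fun e he he01 heP => by
  rw [expectedUtility_midpoint hX hp hp01 hd hd01 hd' hd01']
  linarith [hopt e he he01 heP, hopt' e he he01 heP]

section Groups

variable [MeasurableSpace G] [MeasurableSingletonClass G]

lemma measurableSet_group (hX : Measurable X) (hg : Measurable g) (a : G) :
    MeasurableSet {ω | g (X ω) = a} :=
  (hg.comp hX) (measurableSet_singleton a)

lemma StatParity.of_eq_off_group (hX : Measurable X) (hg : Measurable g) {a : G} {e f : 𝒳 → ℝ}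
    (hoff : ∀ x, g x ≠ a → e x = f x)
    (hgroup : ∫ ω in {ω | g (X ω) = a}, e (X ω) ∂μ = ∫ ω in {ω | g (X ω) = a}, f (X ω) ∂μ)
    (htotal : ∫ ω, e (X ω) ∂μ = ∫ ω, f (X ω) ∂μ) (hf : StatParity μ X g f) :
    StatParity μ X g e := by
  intro b
  rw [htotal, ← hf b]
  rcases eq_or_ne b a with rfl | hb
  · rw [hgroup]
  · rw [setIntegral_congr_fun (measurableSet_group hX hg b)
      fun ω (hω : g (X ω) = b) => hoff _ (hω ▸ hb)]

theorem IsOptimalUnderParity.exists_threshold_ae_eq [IsProbabilityMeasure μ] (hX : Measurable X)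
    (hp : Measurable p) (hp01 : ∀ x, p x ∈ Icc (0:ℝ) 1) (hg : Measurable g) {a : G}
    (hμa : μ {ω | g (X ω) = a} ≠ 0)
    [NullSingletonClass ((μ[|{ω | g (X ω) = a}]).map fun ω => p (X ω))]
    {f : 𝒳 → ℝ} (hf : Measurable f) (hf01 : ∀ x, f x ∈ Icc (0:ℝ) 1) (hfP : StatParity μ X g f)
    (hopt : IsOptimalUnderParity μ X g p c f) :
    ∃ t : ℝ, ∀ᵐ ω ∂μ, g (X ω) = a → f (X ω) = if t < p (X ω) then 1 else 0 := by
  classical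
  set S := {ω | g (X ω) = a}
  have hS : MeasurableSet S := measurableSet_group hX hg a
  have hpX : Measurable fun ω => p (X ω) := hp.comp hX
  obtain ⟨t, ht⟩ := exists_measureReal_inter_preimage_Ioi_eq hS hμa hpX (fun ω => hp01 (X ω))
    (integral_mem_Icc_of_mem_Icc (μ := μ) (f := fun ω => f (X ω)) (hf.comp hX)
      fun ω => hf01 (X ω))
  let e : 𝒳 → ℝ := fun x => if g x = a then (if t < p x then 1 else 0) else f x
  have he : Measurable e := Measurable.ite (hg (measurableSet_singleton a))
    (Measurable.ite (measurableSet_lt measurable_const hp) measurable_const measurable_const) hf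
  have he01 : ∀ x, e x ∈ Icc (0:ℝ) 1 := fun x => by
    dsimp only [e]; split_ifs <;> simp [hf01 x]
  have hon : ∀ ω ∈ S, e (X ω) = if t < p (X ω) then 1 else 0 := fun ω hω => if_pos hω
  have hoff : ∀ x, g x ≠ a → e x = f x := fun x hx => if_neg hx
  have hgroup : ∫ ω in S, e (X ω) ∂μ = ∫ ω in S, f (X ω) ∂μ := by
    rw [setIntegral_congr_fun hS hon, setIntegral_threshold hpX, ht, eq_comm,
      ← div_eq_iff (measureReal_ne_zero_iff (measure_ne_top μ S) |>.2 hμa)]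
    exact hfP a
  have hint : ∀ r : 𝒳 → ℝ, Measurable r → (∀ x, r x ∈ Icc (0:ℝ) 1) →
      Integrable (fun ω => r (X ω)) μ ∧ Integrable (fun ω => p (X ω) * r (X ω)) μ :=
    fun r hr hr01 => ⟨integrable_comp_of_mem_Icc hX hr hr01, integrable_comp_of_mem_Icc hX
      (hp.mul hr) fun x => unitInterval.mul_mem (hp01 x) (hr01 x)⟩
  have htotal : ∫ ω, e (X ω) ∂μ = ∫ ω, f (X ω) ∂μ :=
    integral_eq_of_setIntegral_eq_of_eqOn_compl hS (hint e he he01).1 (hint f hf hf01).1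
      (fun ω hω => hoff _ hω) hgroup
  have hle : ∫ ω, p (X ω) * e (X ω) ∂μ ≤ ∫ ω, p (X ω) * f (X ω) ∂μ := by
    have := hopt e he he01 (hfP.of_eq_off_group hX hg hoff hgroup htotal)
    rw [expectedUtility, expectedUtility, htotal] at this
    linarith
  exact ⟨t, ae_eq_threshold_of_integral_mul_le (hint e he he01).1 (hint f hf hf01).1
    (hint e he he01).2 (hint f hf hf01).2 (fun ω => hf01 (X ω)) hon (fun ω hω => hoff _ hω)
    htotal hle (measure_inter_preimage_singleton_eq_zero hS hpX t)⟩

end Groups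

end Measurable

end Fairness

theorem stmt_4_general
    {Ω 𝒳 G : Type*} [MeasurableSpace Ω] [MeasurableSpace 𝒳]
    [Fintype G] [MeasurableSpace G] [MeasurableSingletonClass G]
    (μ : Measure Ω) [IsProbabilityMeasure μ]
    (X : Ω → 𝒳) (hX : Measurable X)
    (Y : Ω → ℝ)
    (p : 𝒳 → ℝ) (hp : Measurable p) (hp01 : ∀ x, p x ∈ Icc (0:ℝ) 1)
    (hrisk : ∀ f : 𝒳 → ℝ, Measurable f → (∃ C, ∀ x, |f x| ≤ C) →
      ∫ ω, Y ω * f (X ω) ∂μ = ∫ ω, p (X ω) * f (X ω) ∂μ)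
    (g : 𝒳 → G) (hg : Measurable g)
    (hgpos : ∀ a : G, 0 < μ {ω | g (X ω) = a})
    (hdens : ∀ a : G,
      PosDensity01 (Measure.map (fun ω => p (X ω))
        (ProbabilityTheory.cond μ {ω | g (X ω) = a})))
    (c : ℝ)
    (d d' : 𝒳 → ℝ)
    (hd : Measurable d) (hd01 : ∀ x, d x ∈ Icc (0:ℝ) 1) (hdP : StatParity μ X g d)
    (hd' : Measurable d') (hd01' : ∀ x, d' x ∈ Icc (0:ℝ) 1) (hdP' : StatParity μ X g d')
    (hmax : ∀ e : 𝒳 → ℝ, Measurable e → (∀ x, e x ∈ Icc (0:ℝ) 1) → StatParity μ X g e →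
      (∫ ω, Y ω * e (X ω) ∂μ) - c * ∫ ω, e (X ω) ∂μ
        ≤ (∫ ω, Y ω * d (X ω) ∂μ) - c * ∫ ω, d (X ω) ∂μ)
    (hmax' : ∀ e : 𝒳 → ℝ, Measurable e → (∀ x, e x ∈ Icc (0:ℝ) 1) → StatParity μ X g e →
      (∫ ω, Y ω * e (X ω) ∂μ) - c * ∫ ω, e (X ω) ∂μ
        ≤ (∫ ω, Y ω * d' (X ω) ∂μ) - c * ∫ ω, d' (X ω) ∂μ) :
    ∀ᵐ ω ∂μ, d (X ω) = d' (X ω) := by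
  have hopt := isOptimalUnderParity_of_integral_mul_sub_le hrisk hd hd01 hmax
  have hopt' := isOptimalUnderParity_of_integral_mul_sub_le hrisk hd' hd01' hmax'
  let h : 𝒳 → ℝ := fun x => 2⁻¹ * (d + d') x
  have hh01 : ∀ x, h x ∈ Icc (0:ℝ) 1 := fun x => by
    simp only [h, Pi.add_apply, mem_Icc]
    constructor <;> linarith [(hd01 x).1, (hd01 x).2, (hd01' x).1, (hd01' x).2]
  have hhP : StatParity μ X g h := (hdP.add hdP' (integrable_comp_of_mem_Icc hX hd hd01)
    (integrable_comp_of_mem_Icc hX hd' hd01')).const_mul 2⁻¹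
  have hhopt := hopt.midpoint hX hp hp01 hd hd01 hd' hd01' hopt'
  have hgroup : ∀ a : G, ∀ᵐ ω ∂μ, g (X ω) = a → d (X ω) = d' (X ω) := by
    intro a
    have := (hdens a).nullSingletonClass
    obtain ⟨t, ht⟩ := hopt.exists_threshold_ae_eq hX hp hp01 hg (hgpos a).ne' hd hd01 hdP
    obtain ⟨t', ht'⟩ :=
      hopt'.exists_threshold_ae_eq hX hp hp01 hg (hgpos a).ne' hd' hd01' hdP'
    obtain ⟨s, hs⟩ := hhopt.exists_threshold_ae_eq hX hp hp01 hg (hgpos a).ne'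
      ((hd.add hd').const_mul _) hh01 hhP
    filter_upwards [ht, ht', hs] with ω hdω hdω' hhω hω
    have hmid := hhω hω
    simp only [Pi.add_apply, hdω hω, hdω' hω] at hmid ⊢
    exact eq_of_two_inv_mul_add_eq_ite hmid
  filter_upwards [ae_all_iff.2 hgroup] with ω hω using hω _ rfl

/-- if `d` and `d'` both satisfy statistical parity and both attain the
maximum of `u(·,c)` over decision rules satisfying statistical parity, then
`d(X) = d'(X)` μ-almost surely. -/
theorem stmt_4
    {Ω 𝒳 G : Type*} [MeasurableSpace Ω] [MeasurableSpace 𝒳]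
    [Fintype G] [MeasurableSpace G] [MeasurableSingletonClass G]
    (μ : Measure Ω) [IsProbabilityMeasure μ]
    (X : Ω → 𝒳) (hX : Measurable X)
    (Y : Ω → ℝ) (hY : Measurable Y) (hY01 : ∀ ω, Y ω = 0 ∨ Y ω = 1)
    (p : 𝒳 → ℝ) (hp : Measurable p) (hp01 : ∀ x, p x ∈ Icc (0:ℝ) 1)
    (hrisk : ∀ f : 𝒳 → ℝ, Measurable f → (∃ C, ∀ x, |f x| ≤ C) →
      ∫ ω, Y ω * f (X ω) ∂μ = ∫ ω, p (X ω) * f (X ω) ∂μ)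
    (g : 𝒳 → G) (hg : Measurable g)
    (hgpos : ∀ a : G, 0 < μ {ω | g (X ω) = a})
    (hdens : ∀ a : G,
      PosDensity01 (Measure.map (fun ω => p (X ω))
        (ProbabilityTheory.cond μ {ω | g (X ω) = a})))
    (c : ℝ) (hc0 : 0 < c) (hc1 : c < 1)
    (d d' : 𝒳 → ℝ)
    (hd : Measurable d) (hd01 : ∀ x, d x ∈ Icc (0:ℝ) 1) (hdP : StatParity μ X g d)
    (hd' : Measurable d') (hd01' : ∀ x, d' x ∈ Icc (0:ℝ) 1) (hdP' : StatParity μ X g d')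
    (hmax : ∀ e : 𝒳 → ℝ, Measurable e → (∀ x, e x ∈ Icc (0:ℝ) 1) → StatParity μ X g e →
      (∫ ω, Y ω * e (X ω) ∂μ) - c * ∫ ω, e (X ω) ∂μ
        ≤ (∫ ω, Y ω * d (X ω) ∂μ) - c * ∫ ω, d (X ω) ∂μ)
    (hmax' : ∀ e : 𝒳 → ℝ, Measurable e → (∀ x, e x ∈ Icc (0:ℝ) 1) → StatParity μ X g e →
      (∫ ω, Y ω * e (X ω) ∂μ) - c * ∫ ω, e (X ω) ∂μ
        ≤ (∫ ω, Y ω * d' (X ω) ∂μ) - c * ∫ ω, d' (X ω) ∂μ) :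
    ∀ᵐ ω ∂μ, d (X ω) = d' (X ω) :=
  stmt_4_general μ X hX Y p hp hp01 hrisk g hg hgpos hdens c d d' hd hd01 hdP hd' hd01' hdP' hmax
    hmax'
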